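/- (Lemma 2.) Let the bias b_ℓ = 0 and the learning rate r_ℓ > 0. Fix a word b ∈ W with (b,b) ∉ P, and an index j. Let Δ⁺_b[j] = α·Σ_{a:(a,b)∈P} (1 − B(a)_j)·(2·B(b)_j − 1) be the gradient of the positive sub-loss L_{·,b}(B) = α·Σ_{a:(a,b)∈P} ℓ(B(a),B(b)) with respect to bit j of B(b). If the flip probability max(0, ½·tanh(2·r_ℓ·Δ⁺_b[j])) is strictly positive, then flipping bit j of B(b) strictly decreases this sub-loss: L_{·,b}(B^{(b,j)}) = L_{·,b}(B) − Δ⁺_b[j] < L_{·,b}(B); moreover necessarily B(b)_j = 1. -/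

import Mathlib

/-- Flip bit `j` of the binary vector `a`. -/
def flipBit {d : ℕ} (a : Fin d → Fin 2) (j : Fin d) : Fin d → Fin 2 :=
  Function.update a j (1 - a j)

/-- Positive violation count: number of indices `k` with `a k = 0` and `b k = 1`. -/
def posViol {d : ℕ} (a b : Fin d → Fin 2) : ℕ :=
  (Finset.univ.filter (fun k => a k = 0 ∧ b k = 1)).card

/-- A bit interpreted as a real number. -/
def bitR {d : ℕ} (a : Fin d → Fin 2) (j : Fin d) : ℝ := ((a j : ℕ) : ℝ)

/-- The positive sub-loss associated with pairs whose second component is `b`. -/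
noncomputable def subLossSnd {W : Type*} [DecidableEq W] {d : ℕ} (α : ℝ)
    (P : Finset (W × W)) (B : W → Fin d → Fin 2) (b : W) : ℝ :=
  α * ∑ p ∈ P.filter (fun p => p.2 = b), (posViol (B p.1) (B p.2) : ℝ)

/-- The gradient of the positive sub-loss with respect to bit `j` of `B b`. -/
noncomputable def gradPosSnd {W : Type*} [DecidableEq W] {d : ℕ} (α : ℝ)
    (P : Finset (W × W)) (B : W → Fin d → Fin 2) (b : W) (j : Fin d) : ℝ :=
  α * ∑ p ∈ P.filter (fun p => p.2 = b), (1 - bitR (B p.1) j) * (2 * bitR (B b) j - 1)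

/-!
With `B(b)_j = 1`, each gradient term is `1 - B(a)_j`, which is exactly the violation at `j`
that flipping the bit removes from `ℓ(B(a), B(b))`; `(b, b) ∉ P` keeps the first arguments
`B(a)` fixed. A positive flip probability means `tanh (2 r Δ) > 0`, i.e. `Δ > 0`, and a
positive gradient forces `B(b)_j = 1`, since with `B(b)_j = 0` every term is `-(1 - B(a)_j) ≤ 0`.
-/

theorem Real.tanh_pos_iff {x : ℝ} : 0 < Real.tanh x ↔ 0 < x := by
  rw [Real.tanh_eq_sinh_div_cosh, div_pos_iff_of_pos_right (Real.cosh_pos x), Real.sinh_pos_iff]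

section Bits

variable {d : ℕ}

theorem bitR_le_one (a : Fin d → Fin 2) (j : Fin d) : bitR a j ≤ 1 := by
  unfold bitR
  exact_mod_cast Nat.le_of_lt_succ (a j).is_lt

theorem bitR_of_eq_zero {a : Fin d → Fin 2} {j : Fin d} (h : a j = 0) : bitR a j = 0 := by
  simp [bitR, h]

theorem bitR_of_eq_one {a : Fin d → Fin 2} {j : Fin d} (h : a j = 1) : bitR a j = 1 := by
  simp [bitR, h]

theorem Fin.two_eq_zero_or_one (x : Fin 2) : x = 0 ∨ x = 1 := by
  omega

theorem posViol_flipBit_of_eq_one (a c : Fin d → Fin 2) {j : Fin d} (hc : c j = 1) :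
    (posViol a (flipBit c j) : ℝ) = posViol a c - (1 - bitR a j) := by
  have hfilter : Finset.univ.filter (fun k => a k = 0 ∧ flipBit c j k = 1)
      = (Finset.univ.filter (fun k => a k = 0 ∧ c k = 1)).erase j := by
    ext k
    by_cases hk : k = j
    · subst hk
      simp [flipBit, hc]
    · simp [flipBit, Function.update_apply, hk]
  rcases Fin.two_eq_zero_or_one (a j) with ha | ha
  · have hj : j ∈ Finset.univ.filter (fun k => a k = 0 ∧ c k = 1) := by simp [ha, hc]
    rw [posViol, posViol, hfilter, Finset.card_erase_of_mem hj,
      Nat.cast_sub (Finset.card_pos.mpr ⟨j, hj⟩), bitR_of_eq_zero ha]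
    ring
  · have hj : j ∉ Finset.univ.filter (fun k => a k = 0 ∧ c k = 1) := by simp [ha]
    rw [posViol, posViol, hfilter, Finset.erase_eq_of_notMem hj, bitR_of_eq_one ha]
    ring

end Bits

section SubLoss

variable {W : Type*} [DecidableEq W] {d : ℕ} {α : ℝ} {P : Finset (W × W)}
  {B : W → Fin d → Fin 2} {b : W} {j : Fin d}

theorem gradPosSnd_nonpos_of_eq_zero (hα : 0 ≤ α) (h : B b j = 0) :
    gradPosSnd α P B b j ≤ 0 := by
  refine mul_nonpos_of_nonneg_of_nonpos hα (Finset.sum_nonpos fun p _ => ?_)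
  have := bitR_le_one (B p.1) j
  rw [bitR_of_eq_zero h]
  linarith

theorem eq_one_of_gradPosSnd_pos (hα : 0 ≤ α) (hgrad : 0 < gradPosSnd α P B b j) :
    B b j = 1 :=
  (Fin.two_eq_zero_or_one (B b j)).resolve_left fun h =>
    (gradPosSnd_nonpos_of_eq_zero hα h).not_gt hgrad

theorem subLossSnd_update_flipBit (hb : (b, b) ∉ P) (h : B b j = 1) :
    subLossSnd α P (Function.update B b (flipBit (B b) j)) b
      = subLossSnd α P B b - gradPosSnd α P B b j := by
  unfold subLossSnd gradPosSnd
  rw [← mul_sub, ← Finset.sum_sub_distrib]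
  refine congrArg (α * ·) (Finset.sum_congr rfl fun p hp => ?_)
  obtain ⟨hpP, hp2⟩ := Finset.mem_filter.mp hp
  have hp1 : p.1 ≠ b := fun h1 => hb ((show p = (b, b) from Prod.ext h1 hp2) ▸ hpP)
  rw [Function.update_of_ne hp1, hp2, Function.update_self,
    posViol_flipBit_of_eq_one (B p.1) (B b) h, bitR_of_eq_one h]
  ring

end SubLoss

/-- Lemma 2: if the flip probability of bit `j` of `B b` is strictly positive (with zero
bias), then flipping that bit strictly decreases the positive sub-loss associated with `b`. -/
theorem flip_decreases_subLossSnd {W : Type*} [DecidableEq W] {d : ℕ}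
    (α rℓ : ℝ) (hα : 0 < α) (hr : 0 < rℓ) (P : Finset (W × W))
    (B : W → Fin d → Fin 2) (b : W) (hb : (b, b) ∉ P) (j : Fin d)
    (hprob : 0 < max 0 (1 / 2 * Real.tanh (2 * (rℓ * gradPosSnd α P B b j)))) :
    subLossSnd α P (Function.update B b (flipBit (B b) j)) b
        = subLossSnd α P B b - gradPosSnd α P B b j ∧
    subLossSnd α P (Function.update B b (flipBit (B b) j)) b < subLossSnd α P B b ∧
    B b j = 1 := by
  have htanh : 0 < Real.tanh (2 * (rℓ * gradPosSnd α P B b j)) := by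
    rcases lt_max_iff.mp hprob with h | h <;> linarith
  have hgrad : 0 < gradPosSnd α P B b j :=
    pos_of_mul_pos_right (pos_of_mul_pos_right (Real.tanh_pos_iff.mp htanh) zero_le_two) hr.le
  have hbj : B b j = 1 := eq_one_of_gradPosSnd_pos hα.le hgrad
  have heq := subLossSnd_update_flipBit (α := α) hb hbj
  exact ⟨heq, heq ▸ sub_lt_self _ hgrad, hbj⟩
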